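/- Fix β > 0. For every parameter vector K ∈ ℝ^{m(2n-1)} and every (φ, λ, t) ∈ ℝ^{mn} × ℝ × [0,1) with H_K(φ, λ, t) = 0, one has φᵀφ = 1/(h₁h₂) and |λ| ≤ ρ(A(K)) + ρ(D) + β/(h₁h₂), where ρ(M) denotes the maximum of |μ| over all eigenvalues μ of the symmetric matrix M. In particular every connected component of the zero set of H_K in ℝ^{mn} × ℝ × [0,1) is bounded. -/

import Mathlib

open MeasureTheory

/-- The block-diagonal matrix A(K) with symmetric tridiagonal blocks, with
diagonal parameters `a` and off-diagonal parameters `b`. -/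
def blockTridiag {m n : ℕ} (a : Fin m → Fin n → ℝ) (b : Fin m → Fin (n - 1) → ℝ) :
    Matrix (Fin m × Fin n) (Fin m × Fin n) ℝ :=
  Matrix.of fun p q =>
    if p.1 = q.1 then
      (if p.2 = q.2 then a p.1 p.2 else 0)
        + (∑ j : Fin (n - 1), if (p.2 : ℕ) = (j : ℕ) ∧ (q.2 : ℕ) = (j : ℕ) + 1 then b p.1 j else 0)
        + (∑ j : Fin (n - 1), if (q.2 : ℕ) = (j : ℕ) ∧ (p.2 : ℕ) = (j : ℕ) + 1 then b p.1 j else 0)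
    else 0

/-- The 2D homotopy map H_K(φ, λ, t). -/
noncomputable def homotopy2D {m n : ℕ} (h₁ h₂ β : ℝ)
    (D : Matrix (Fin m × Fin n) (Fin m × Fin n) ℝ)
    (a : Fin m → Fin n → ℝ) (b : Fin m → Fin (n - 1) → ℝ)
    (p : ((Fin m × Fin n) → ℝ) × ℝ × ℝ) : ((Fin m × Fin n) → ℝ) × ℝ :=
  ((1 - p.2.2) • (blockTridiag a b).mulVec p.1 + D.mulVec p.1
      + (p.2.2 * β) • (fun q => p.1 q ^ 3) - p.2.1 • p.1,
    (1 / 2) * (1 / (h₁ * h₂) - ∑ q, p.1 q ^ 2))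

/-!
Taking the dot product of the first component of `H_K(φ, λ, t) = 0` with `φ` gives
`λ ‖φ‖² = (1 - t) φᵀ A φ + φᵀ D φ + t β ∑ φᵢ⁴`. Expanding in an orthonormal eigenbasis bounds each
quadratic form by the spectral radius times `‖φ‖²`, and `∑ φᵢ⁴ ≤ ‖φ‖⁴`; since the second component
pins `‖φ‖² = 1/(h₁h₂) > 0`, dividing by it bounds `|λ|`. Hence the whole zero set over `t ∈ [0, 1)`
is bounded, and with it every connected component.
-/

namespace Matrix

variable {ι : Type*} [Fintype ι] [DecidableEq ι] {A : Matrix ι ι ℝ}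

lemma IsHermitian.sum_dotProduct_eigenvectorBasis_mul (hA : A.IsHermitian) (x y : ι → ℝ) :
    ∑ i, (⇑(hA.eigenvectorBasis i) ⬝ᵥ x) * (⇑(hA.eigenvectorBasis i) ⬝ᵥ y) = x ⬝ᵥ y := by
  simpa [PiLp.inner_apply, dotProduct, mul_comm] using
    hA.eigenvectorBasis.sum_inner_mul_inner (WithLp.toLp 2 x) (WithLp.toLp 2 y)

lemma IsHermitian.dotProduct_mulVec_self_eq_sum (hA : A.IsHermitian) (x : ι → ℝ) :
    x ⬝ᵥ A *ᵥ x = ∑ i, hA.eigenvalues i * (⇑(hA.eigenvectorBasis i) ⬝ᵥ x) ^ 2 := by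
  rw [← hA.sum_dotProduct_eigenvectorBasis_mul x (A *ᵥ x)]
  refine Finset.sum_congr rfl fun i _ => ?_
  rw [dotProduct_mulVec, ← mulVec_transpose, (isHermitian_iff_isSymm.mp hA).eq,
    hA.mulVec_eigenvectorBasis, smul_dotProduct, smul_eq_mul]
  ring

lemma IsHermitian.abs_dotProduct_mulVec_self_le (hA : A.IsHermitian) {ρ : ℝ}
    (hρ : ∀ μ : ℝ, (∃ y : ι → ℝ, y ≠ 0 ∧ A *ᵥ y = μ • y) → |μ| ≤ ρ) (x : ι → ℝ) :
    |x ⬝ᵥ A *ᵥ x| ≤ ρ * ∑ i, x i ^ 2 := by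
  have h_eig : ∀ i, |hA.eigenvalues i| ≤ ρ := fun i =>
    hρ _ ⟨_, by simpa using hA.eigenvectorBasis.orthonormal.ne_zero i, hA.mulVec_eigenvectorBasis i⟩
  calc |x ⬝ᵥ A *ᵥ x| ≤ ∑ i, |hA.eigenvalues i| * (⇑(hA.eigenvectorBasis i) ⬝ᵥ x) ^ 2 := by
        rw [hA.dotProduct_mulVec_self_eq_sum]
        refine (Finset.abs_sum_le_sum_abs _ _).trans_eq ?_
        simp [abs_mul]
    _ ≤ ∑ i, ρ * (⇑(hA.eigenvectorBasis i) ⬝ᵥ x) ^ 2 := by gcongr with i; exact h_eig i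
    _ = ρ * ∑ i, x i ^ 2 := by
        rw [← Finset.mul_sum]
        simp_rw [sq]
        rw [hA.sum_dotProduct_eigenvectorBasis_mul, dotProduct]

end Matrix

open Matrix

theorem blockTridiag_isSymm {m n : ℕ} (a : Fin m → Fin n → ℝ) (b : Fin m → Fin (n - 1) → ℝ) :
    (blockTridiag a b).IsSymm := by
  refine IsSymm.ext fun p q => ?_
  simp only [blockTridiag, of_apply]
  by_cases hi : p.1 = q.1
  · rw [if_pos hi, if_pos hi.symm, hi]
    by_cases hj : p.2 = q.2
    · rw [hj]
    · rw [if_neg hj, if_neg (Ne.symm hj)]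
      ring
  · rw [if_neg hi, if_neg (Ne.symm hi)]

theorem isSymm_of_fivePointStencil {m n : ℕ} {c₁ c₂ : ℝ}
    {D : Matrix (Fin m × Fin n) (Fin m × Fin n) ℝ}
    (hvert : ∀ (i : Fin m) (j j' : Fin n), |(j : ℤ) - (j' : ℤ)| = 1 → D (i, j) (i, j') = c₂)
    (hhor : ∀ (i i' : Fin m) (j : Fin n), |(i : ℤ) - (i' : ℤ)| = 1 → D (i, j) (i', j) = c₁)
    (hzero : ∀ p q : Fin m × Fin n, p ≠ q →
      ¬(p.1 = q.1 ∧ |(p.2 : ℤ) - (q.2 : ℤ)| = 1) →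
      ¬(p.2 = q.2 ∧ |(p.1 : ℤ) - (q.1 : ℤ)| = 1) → D p q = 0) :
    D.IsSymm := by
  refine IsSymm.ext fun ⟨i, j⟩ ⟨i', j'⟩ => ?_
  by_cases hpq : (i, j) = (i', j')
  · rw [hpq]
  by_cases hv : i = i' ∧ |(j : ℤ) - j'| = 1
  · obtain ⟨rfl, hj⟩ := hv
    rw [hvert i j j' hj, hvert i j' j (by rwa [abs_sub_comm])]
  by_cases hh : j = j' ∧ |(i : ℤ) - i'| = 1
  · obtain ⟨rfl, hi⟩ := hh
    rw [hhor i i' j hi, hhor i' i j (by rwa [abs_sub_comm])]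
  rw [hzero _ _ hpq hv hh, hzero _ _ (Ne.symm hpq)
    (fun ⟨h, h'⟩ => hv ⟨h.symm, by rwa [abs_sub_comm] at h'⟩)
    (fun ⟨h, h'⟩ => hh ⟨h.symm, by rwa [abs_sub_comm] at h'⟩)]

theorem sum_pow_four_le_sq_sum_sq {ι : Type*} [Fintype ι] (x : ι → ℝ) :
    ∑ i, x i ^ 4 ≤ (∑ i, x i ^ 2) ^ 2 := by
  simpa only [← pow_mul] using
    Finset.sum_sq_le_sq_sum_of_nonneg (s := Finset.univ) (fun i _ => sq_nonneg (x i))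

theorem abs_le_of_homotopy_eq_zero {ι : Type*} [Fintype ι] [DecidableEq ι]
    {A D : Matrix ι ι ℝ} (hA : A.IsHermitian) (hD : D.IsHermitian) {ρA ρD β t lam : ℝ}
    (hρA : ∀ μ : ℝ, (∃ y : ι → ℝ, y ≠ 0 ∧ A *ᵥ y = μ • y) → |μ| ≤ ρA)
    (hρD : ∀ μ : ℝ, (∃ y : ι → ℝ, y ≠ 0 ∧ D *ᵥ y = μ • y) → |μ| ≤ ρD)
    (hρA0 : 0 ≤ ρA) (hβ : 0 ≤ β) (ht0 : 0 ≤ t) (ht1 : t ≤ 1) {φ : ι → ℝ}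
    (hφ : 0 < ∑ i, φ i ^ 2)
    (h : (1 - t) • A *ᵥ φ + D *ᵥ φ + (t * β) • (fun i => φ i ^ 3) - lam • φ = 0) :
    |lam| ≤ ρA + ρD + β * ∑ i, φ i ^ 2 := by
  set S := ∑ i, φ i ^ 2
  have henergy : lam * S = (1 - t) * (φ ⬝ᵥ A *ᵥ φ) + φ ⬝ᵥ D *ᵥ φ + t * β * ∑ i, φ i ^ 4 := by
    have hφφ : φ ⬝ᵥ φ = S := Finset.sum_congr rfl fun i _ => (sq (φ i)).symm
    have hcube : φ ⬝ᵥ (fun i => φ i ^ 3) = ∑ i, φ i ^ 4 :=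
      Finset.sum_congr rfl fun i _ => by ring
    have := congrArg (φ ⬝ᵥ ·) h
    simp only [dotProduct_sub, dotProduct_add, dotProduct_smul, dotProduct_zero, smul_eq_mul,
      hφφ, hcube] at this
    linarith
  have hlamS : |lam| * S ≤ (ρA + ρD + β * S) * S := calc
    |lam| * S = |lam * S| := by rw [abs_mul, abs_of_pos hφ]
    _ ≤ (1 - t) * |φ ⬝ᵥ A *ᵥ φ| + |φ ⬝ᵥ D *ᵥ φ| + t * β * ∑ i, φ i ^ 4 := by
        rw [henergy]
        refine (abs_add_three _ _ _).trans_eq ?_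
        rw [abs_mul, abs_mul, abs_of_nonneg (sub_nonneg.mpr ht1),
          abs_of_nonneg (mul_nonneg ht0 hβ), abs_of_nonneg (by positivity : 0 ≤ ∑ i, φ i ^ 4)]
    _ ≤ (1 - t) * (ρA * S) + ρD * S + t * β * S ^ 2 := by
        gcongr
        · exact hA.abs_dotProduct_mulVec_self_le hρA φ
        · exact hD.abs_dotProduct_mulVec_self_le hρD φ
        · exact sum_pow_four_le_sq_sum_sq φ
    _ ≤ (ρA + ρD + β * S) * S := by
        nlinarith [mul_nonneg (mul_nonneg ht0 hρA0) hφ.le,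
          mul_nonneg (mul_nonneg (sub_nonneg.mpr ht1) hβ) (sq_nonneg S)]
  exact le_of_mul_le_mul_right hlamS hφ

theorem pi_norm_le_sqrt_sum_sq {ι : Type*} [Fintype ι] (x : ι → ℝ) : ‖x‖ ≤ √(∑ i, x i ^ 2) :=
  (pi_norm_le_iff_of_nonneg (Real.sqrt_nonneg _)).mpr fun i =>
    Real.abs_le_sqrt (Finset.single_le_sum (fun j _ => sq_nonneg (x j)) (Finset.mem_univ i))

theorem homotopy2D_eq_zero_iff {m n : ℕ} {h₁ h₂ β : ℝ}
    {D : Matrix (Fin m × Fin n) (Fin m × Fin n) ℝ} {a : Fin m → Fin n → ℝ}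
    {b : Fin m → Fin (n - 1) → ℝ} {φ : Fin m × Fin n → ℝ} {lam t : ℝ} :
    homotopy2D h₁ h₂ β D a b (φ, lam, t) = 0 ↔
      (1 - t) • blockTridiag a b *ᵥ φ + D *ᵥ φ + (t * β) • (fun q => φ q ^ 3) - lam • φ = 0 ∧
        ∑ q, φ q ^ 2 = 1 / (h₁ * h₂) := by
  refine Prod.ext_iff.trans (Iff.and Iff.rfl ?_)
  constructor <;> intro h <;> simp only [homotopy2D, Prod.snd_zero] at * <;> linarith

theorem stmt_19_general (m n : ℕ)
    (h₁ h₂ : ℝ) (hh₁ : 0 < h₁) (hh₂ : 0 < h₂)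
    (D : Matrix (Fin m × Fin n) (Fin m × Fin n) ℝ)
    (hDvert : ∀ (i : Fin m) (j j' : Fin n), |(j : ℤ) - (j' : ℤ)| = 1 →
      D (i, j) (i, j') = -(1 / (2 * h₂ ^ 2)))
    (hDhor : ∀ (i i' : Fin m) (j : Fin n), |(i : ℤ) - (i' : ℤ)| = 1 →
      D (i, j) (i', j) = -(1 / (2 * h₁ ^ 2)))
    (hDzero : ∀ p q : Fin m × Fin n, p ≠ q →
      ¬(p.1 = q.1 ∧ |(p.2 : ℤ) - (q.2 : ℤ)| = 1) →
      ¬(p.2 = q.2 ∧ |(p.1 : ℤ) - (q.1 : ℤ)| = 1) → D p q = 0)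
    (β : ℝ) (hβ : 0 < β)
    (a : Fin m → Fin n → ℝ) (b : Fin m → Fin (n - 1) → ℝ)
    (ρA ρD : ℝ)
    (hρA : IsGreatest { r : ℝ | ∃ μ : ℝ,
      (∃ y : Fin m × Fin n → ℝ, y ≠ 0 ∧ (blockTridiag a b).mulVec y = μ • y) ∧ r = |μ| } ρA)
    (hρD : IsGreatest { r : ℝ | ∃ μ : ℝ,
      (∃ y : Fin m × Fin n → ℝ, y ≠ 0 ∧ D.mulVec y = μ • y) ∧ r = |μ| } ρD) :
    (∀ (φ : Fin m × Fin n → ℝ) (lam t : ℝ), 0 ≤ t → t < 1 →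
      homotopy2D h₁ h₂ β D a b (φ, lam, t) = 0 →
        (∑ q, φ q ^ 2) = 1 / (h₁ * h₂) ∧
        |lam| ≤ ρA + ρD + β / (h₁ * h₂)) ∧
    (∀ p : ((Fin m × Fin n) → ℝ) × ℝ × ℝ,
      p ∈ {q : ((Fin m × Fin n) → ℝ) × ℝ × ℝ |
        0 ≤ q.2.2 ∧ q.2.2 < 1 ∧ homotopy2D h₁ h₂ β D a b q = 0} →
      Bornology.IsBounded (connectedComponentIn
        {q : ((Fin m × Fin n) → ℝ) × ℝ × ℝ |
          0 ≤ q.2.2 ∧ q.2.2 < 1 ∧ homotopy2D h₁ h₂ β D a b q = 0} p)) := by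
  have hA := isHermitian_iff_isSymm.mpr (blockTridiag_isSymm a b)
  have hD := isHermitian_iff_isSymm.mpr (isSymm_of_fivePointStencil hDvert hDhor hDzero)
  have hρA0 : 0 ≤ ρA := by
    obtain ⟨μ, -, rfl⟩ := hρA.1
    exact abs_nonneg μ
  have hzero (φ : Fin m × Fin n → ℝ) (lam t : ℝ) (ht0 : 0 ≤ t) (ht1 : t < 1)
      (hH : homotopy2D h₁ h₂ β D a b (φ, lam, t) = 0) :
      ∑ q, φ q ^ 2 = 1 / (h₁ * h₂) ∧ |lam| ≤ ρA + ρD + β / (h₁ * h₂) := by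
    obtain ⟨hφ, hsum⟩ := homotopy2D_eq_zero_iff.mp hH
    refine ⟨hsum, ?_⟩
    have hpos : 0 < ∑ q, φ q ^ 2 := by rw [hsum]; positivity
    simpa only [hsum, mul_one_div] using abs_le_of_homotopy_eq_zero hA hD
      (fun μ hμ => hρA.2 ⟨μ, hμ, rfl⟩) (fun μ hμ => hρD.2 ⟨μ, hμ, rfl⟩) hρA0 hβ.le ht0 ht1.le
      hpos hφ
  refine ⟨hzero, fun p _ => ?_⟩
  refine Bornology.IsBounded.subset ?_ (connectedComponentIn_subset _ p)
  refine (Metric.isBounded_closedBall (x := 0) (r := √(1 / (h₁ * h₂))).prod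
    ((Metric.isBounded_closedBall (x := 0) (r := ρA + ρD + β / (h₁ * h₂))).prod
      (Metric.isBounded_Icc 0 1))).subset ?_
  rintro ⟨φ, lam, t⟩ ⟨ht0, ht1, hH⟩
  obtain ⟨hsum, hlam⟩ := hzero φ lam t ht0 ht1 hH
  refine ⟨?_, ?_, ht0, ht1.le⟩
  · rw [mem_closedBall_zero_iff, ← hsum]
    exact pi_norm_le_sqrt_sum_sq φ
  · rwa [mem_closedBall_zero_iff, Real.norm_eq_abs]

/-- on the zero set of the 2D homotopy (with t ∈ [0,1)), the
eigenvector is normalized and |λ| ≤ ρ(A(K)) + ρ(D) + β/(h₁h₂); in particular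
every connected component of the zero set is bounded. -/
theorem stmt_19 (m n : ℕ) (hm : 1 ≤ m) (hn : 1 ≤ n)
    (h₁ h₂ : ℝ) (hh₁ : 0 < h₁) (hh₂ : 0 < h₂)
    (v : Fin m × Fin n → ℝ) (hv : ∀ p, 0 ≤ v p)
    (D : Matrix (Fin m × Fin n) (Fin m × Fin n) ℝ)
    (hDdiag : ∀ p : Fin m × Fin n, D p p = 1 / h₁ ^ 2 + 1 / h₂ ^ 2 + v p)
    (hDvert : ∀ (i : Fin m) (j j' : Fin n), |(j : ℤ) - (j' : ℤ)| = 1 →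
      D (i, j) (i, j') = -(1 / (2 * h₂ ^ 2)))
    (hDhor : ∀ (i i' : Fin m) (j : Fin n), |(i : ℤ) - (i' : ℤ)| = 1 →
      D (i, j) (i', j) = -(1 / (2 * h₁ ^ 2)))
    (hDzero : ∀ p q : Fin m × Fin n, p ≠ q →
      ¬(p.1 = q.1 ∧ |(p.2 : ℤ) - (q.2 : ℤ)| = 1) →
      ¬(p.2 = q.2 ∧ |(p.1 : ℤ) - (q.1 : ℤ)| = 1) → D p q = 0)
    (β : ℝ) (hβ : 0 < β)
    (a : Fin m → Fin n → ℝ) (b : Fin m → Fin (n - 1) → ℝ)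
    (ρA ρD : ℝ)
    (hρA : IsGreatest { r : ℝ | ∃ μ : ℝ,
      (∃ y : Fin m × Fin n → ℝ, y ≠ 0 ∧ (blockTridiag a b).mulVec y = μ • y) ∧ r = |μ| } ρA)
    (hρD : IsGreatest { r : ℝ | ∃ μ : ℝ,
      (∃ y : Fin m × Fin n → ℝ, y ≠ 0 ∧ D.mulVec y = μ • y) ∧ r = |μ| } ρD) :
    (∀ (φ : Fin m × Fin n → ℝ) (lam t : ℝ), 0 ≤ t → t < 1 →
      homotopy2D h₁ h₂ β D a b (φ, lam, t) = 0 →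
        (∑ q, φ q ^ 2) = 1 / (h₁ * h₂) ∧
        |lam| ≤ ρA + ρD + β / (h₁ * h₂)) ∧
    (∀ p : ((Fin m × Fin n) → ℝ) × ℝ × ℝ,
      p ∈ {q : ((Fin m × Fin n) → ℝ) × ℝ × ℝ |
        0 ≤ q.2.2 ∧ q.2.2 < 1 ∧ homotopy2D h₁ h₂ β D a b q = 0} →
      Bornology.IsBounded (connectedComponentIn
        {q : ((Fin m × Fin n) → ℝ) × ℝ × ℝ |
          0 ≤ q.2.2 ∧ q.2.2 < 1 ∧ homotopy2D h₁ h₂ β D a b q = 0} p)) :=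
  stmt_19_general m n h₁ h₂ hh₁ hh₂ D hDvert hDhor hDzero β hβ a b ρA ρD hρA hρD
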